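/- arXiv:2004.04377 — 5 statements merged into one kernel-verified Lean document; each statement's English description precedes it below -/
import Mathlib

section
/- Let n ≥ 1, let (eᵢ) be the standard basis of ℂⁿ, and let w = Σᵢ eᵢ ⊗ eᵢ ∈ ℂⁿ ⊗ ℂⁿ. Then the set of vectors v ∈ ℂⁿ ⊗ ℂⁿ satisfying (p ⊗ (1 − p)ᵀ) v = 0 for every projection matrix p equals the one-dimensional span of w. -/
open Matrix

open TensorProduct

noncomputable def BB (n : ℕ) : Module.Basis (Fin n × Fin n) ℂ ((Fin n → ℂ) ⊗[ℂ] (Fin n → ℂ)) :=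
  (Pi.basisFun ℂ (Fin n)).tensorProduct (Pi.basisFun ℂ (Fin n))

lemma repr_map (n : ℕ) (A M : Matrix (Fin n) (Fin n) ℂ) (x : (Fin n → ℂ) ⊗[ℂ] (Fin n → ℂ))
    (k l : Fin n) :
    (BB n).repr (TensorProduct.map (Matrix.toLin' A) (Matrix.toLin' M) x) (k, l)
      = ∑ i, ∑ j, A k i * M l j * (BB n).repr x (i, j) := by
  induction x using TensorProduct.induction_on with
  | zero => simp
  | tmul a b =>
    simp only [TensorProduct.map_tmul, BB, Module.Basis.tensorProduct_repr_tmul_apply,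
      Pi.basisFun_repr, Matrix.toLin'_apply, smul_eq_mul, Matrix.mulVec, dotProduct]
    rw [Finset.sum_comm]
    rw [Finset.sum_mul]
    refine Finset.sum_congr rfl fun i _ => ?_
    rw [Finset.mul_sum]
    refine Finset.sum_congr rfl fun j _ => ?_
    ring
  | add x y hx hy =>
    simp [map_add, hx, hy, Finset.sum_add_distrib, mul_add]

lemma repr_w (n : ℕ) (k l : Fin n) :
    (BB n).repr (∑ i : Fin n, (Pi.single i (1 : ℂ)) ⊗ₜ[ℂ] (Pi.single i (1 : ℂ))) (k, l)
      = if k = l then 1 else 0 := by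
  simp [BB, Module.Basis.tensorProduct_repr_tmul_apply, Pi.single_apply, Finset.sum_ite_eq,
    eq_comm]

lemma w_mem (n : ℕ) (p : Matrix (Fin n) (Fin n) ℂ) (hp : p * p = p) :
    TensorProduct.map (Matrix.toLin' p) (Matrix.toLin' (1 - p)ᵀ)
      (∑ i : Fin n, (Pi.single i (1 : ℂ)) ⊗ₜ[ℂ] (Pi.single i (1 : ℂ))) = 0 := by
  rw [← LinearEquiv.map_eq_zero_iff (BB n).repr]
  ext q
  obtain ⟨k, l⟩ := q
  rw [repr_map]
  have h0 : p * (1 - p) = 0 := by rw [mul_sub, mul_one, hp, sub_self]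
  have := congrFun (congrFun h0 k) l
  rw [Matrix.mul_apply] at this
  simp only [repr_w, mul_ite, mul_one, mul_zero, Finset.sum_ite_eq, Finset.mem_univ, if_true,
    Matrix.transpose_apply]
  simpa using this

lemma step_a (n : ℕ) (i j : Fin n) (hij : i ≠ j) (c : Fin n × Fin n → ℂ)
    (h : ∑ a, ∑ b, (Matrix.single i i (1:ℂ)) i a *
        ((1 : Matrix (Fin n) (Fin n) ℂ) - Matrix.single i i 1)ᵀ j b * c (a, b) = 0) :
    c (i, j) = 0 := by
  simp only [Matrix.transpose_apply, Matrix.sub_apply, Matrix.one_apply,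
    Matrix.single, Matrix.of_apply, true_and, ite_mul, one_mul, zero_mul,
    mul_ite, mul_one, mul_zero, sub_mul] at h
  simpa [hij, Finset.sum_ite_eq, Finset.sum_ite_eq'] using h

noncomputable def P2 {n : ℕ} (i j : Fin n) : Matrix (Fin n) (Fin n) ℂ :=
  Matrix.of fun a b => if (a = i ∨ a = j) ∧ (b = i ∨ b = j) then (1/2 : ℂ) else 0

lemma P2_proj {n : ℕ} (i j : Fin n) (hij : i ≠ j) : P2 i j * P2 i j = P2 i j := by
  ext a b
  rw [Matrix.mul_apply]
  have hsum : ∑ m : Fin n, (if m = i ∨ m = j then (1:ℂ) else 0) = 2 := by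
    rw [Finset.sum_boole]
    have : Finset.filter (fun m => m = i ∨ m = j) Finset.univ = {i, j} := by
      ext m; simp
    rw [this, Finset.card_pair hij]
    norm_num
  have : ∀ m : Fin n, P2 i j a m * P2 i j m b
      = (if (a = i ∨ a = j) ∧ (b = i ∨ b = j) then (1/4 : ℂ) else 0)
        * (if m = i ∨ m = j then (1:ℂ) else 0) := by
    intro m
    simp only [P2, Matrix.of_apply]
    split_ifs <;> norm_num <;> tauto
  rw [Finset.sum_congr rfl fun m _ => this m, ← Finset.mul_sum, hsum]
  simp only [P2, Matrix.of_apply]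
  split_ifs <;> norm_num

lemma P2_herm {n : ℕ} (i j : Fin n) : (P2 i j)ᴴ = P2 i j := by
  ext a b
  simp only [Matrix.conjTranspose_apply, P2, Matrix.of_apply]
  split_ifs <;> simp_all

lemma step_b (n : ℕ) (i j : Fin n) (hij : i ≠ j) (c : Fin n × Fin n → ℂ)
    (hoff : ∀ a b : Fin n, a ≠ b → c (a, b) = 0)
    (h : ∑ a, ∑ b, (P2 i j) i a *
        ((1 : Matrix (Fin n) (Fin n) ℂ) - P2 i j)ᵀ j b * c (a, b) = 0) :
    c (i, i) = c (j, j) := by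
  have hin : ∀ a : Fin n, (∑ b, (P2 i j) i a *
      ((1 : Matrix (Fin n) (Fin n) ℂ) - P2 i j)ᵀ j b * c (a, b))
      = (P2 i j) i a * ((1 : Matrix (Fin n) (Fin n) ℂ) - P2 i j)ᵀ j a * c (a, a) := by
    intro a
    refine Finset.sum_eq_single a (fun b _ hb => ?_) (by simp)
    rw [hoff a b (Ne.symm hb), mul_zero]
  rw [Finset.sum_congr rfl fun a _ => hin a] at h
  rw [← Finset.sum_subset (Finset.subset_univ ({i, j} : Finset (Fin n)))
    (fun a _ ha => by
      have hai : a ≠ i := by rintro rfl; simp at ha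
      have haj : a ≠ j := by rintro rfl; simp at ha
      simp [P2, hai, haj])] at h
  rw [Finset.sum_pair hij] at h
  simp only [P2, Matrix.of_apply, Matrix.transpose_apply, Matrix.sub_apply, Matrix.one_apply,
    hij, Ne.symm hij, if_true, if_false, or_true, true_or, and_self, true_and, and_true] at h
  norm_num at h
  linear_combination (-4:ℂ) * h

theorem stmt1 (n : ℕ) (hn : 1 ≤ n) :
    {v : (Fin n → ℂ) ⊗[ℂ] (Fin n → ℂ) |
      ∀ p : Matrix (Fin n) (Fin n) ℂ, p * p = p → pᴴ = p →
        TensorProduct.map (Matrix.toLin' p) (Matrix.toLin' (1 - p)ᵀ) v = 0} =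
    ↑(Submodule.span ℂ
      {∑ i : Fin n, (Pi.single i (1 : ℂ)) ⊗ₜ[ℂ] (Pi.single i (1 : ℂ))}) := by
  ext v
  simp only [Set.mem_setOf_eq, SetLike.mem_coe]
  constructor
  · intro hv
    have key : ∀ p : Matrix (Fin n) (Fin n) ℂ, p * p = p → pᴴ = p → ∀ k l : Fin n,
        ∑ a, ∑ b, p k a * (1 - p)ᵀ l b * (BB n).repr v (a, b) = 0 := by
      intro p hp hph k l
      rw [← repr_map, hv p hp hph]
      simp
    have hoff : ∀ a b : Fin n, a ≠ b → (BB n).repr v (a, b) = 0 := by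
      intro a b hab
      refine step_a n a b hab (fun q => (BB n).repr v q) ?_
      refine key (Matrix.single a a 1) ?_ ?_ a b
      · simp [Matrix.single_mul_single_same]
      · ext x y
        simp only [Matrix.conjTranspose_apply, Matrix.single, Matrix.of_apply, and_comm]
        split_ifs <;> simp
    have hdiag : ∀ a b : Fin n, (BB n).repr v (a, a) = (BB n).repr v (b, b) := by
      intro a b
      by_cases hab : a = b
      · rw [hab]
      · exact step_b n a b hab (fun q => (BB n).repr v q) hoff
          (key (P2 a b) (P2_proj a b hab) (P2_herm a b) a b)
    rw [Submodule.mem_span_singleton]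
    refine ⟨(BB n).repr v (⟨0, hn⟩, ⟨0, hn⟩), ?_⟩
    apply (BB n).repr.injective
    ext q
    obtain ⟨a, b⟩ := q
    rw [_root_.map_smul]
    simp only [Finsupp.smul_apply, repr_w, smul_eq_mul]
    by_cases hab : a = b
    · subst hab
      simp [hdiag ⟨0, hn⟩ a]
    · simp [hab, hoff a b hab]
  · intro hv p hp hph
    rw [Submodule.mem_span_singleton] at hv
    obtain ⟨a, rfl⟩ := hv
    rw [_root_.map_smul, w_mem n p hp, smul_zero]
end

section
/- The only projection q in M₂(ℂ) ⊗ M₂(ℂ) satisfying q · (p ⊗ (1 − p)) = 0 for every projection p ∈ M₂(ℂ) is q = 0. -/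
open Matrix

/-- Auxiliary: view a 4×4 matrix as a matrix indexed by `Fin 2 × Fin 2`. -/
def mm4 (v : Matrix (Fin 4) (Fin 4) ℂ) : Matrix (Fin 2 × Fin 2) (Fin 2 × Fin 2) ℂ :=
  Matrix.of fun a b => v ⟨2 * a.1.val + a.2.val, by omega⟩ ⟨2 * b.1.val + b.2.val, by omega⟩

noncomputable def B1 : Matrix (Fin 2 × Fin 2) (Fin 2 × Fin 2) ℂ :=
  mm4 !![0,0,0,0; 1/2 - Complex.I/2, 1, 0, -1/2 - Complex.I/2; 0,0,0,0; 0,0,0,0]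

noncomputable def B2 : Matrix (Fin 2 × Fin 2) (Fin 2 × Fin 2) ℂ :=
  mm4 !![0,0,0,0; 0,0,0,0; -1/2 + Complex.I/2, 0, 1, 1/2 + Complex.I/2; 0,0,0,0]

noncomputable def B3 : Matrix (Fin 2 × Fin 2) (Fin 2 × Fin 2) ℂ :=
  mm4 !![1/2,0,0,-1/2; -1/2,0,0,1/2; 1/2,0,0,-1/2; -1/2,0,0,1/2]

noncomputable def B4 : Matrix (Fin 2 × Fin 2) (Fin 2 × Fin 2) ℂ :=
  mm4 !![1/2,0,0,1/2; Complex.I/2,0,0,Complex.I/2; -Complex.I/2,0,0,-Complex.I/2; 1/2,0,0,1/2]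

set_option maxHeartbeats 2000000 in
theorem stmt3 (q : Matrix (Fin 2 × Fin 2) (Fin 2 × Fin 2) ℂ)
    (hq1 : q * q = q) (hq2 : qᴴ = q)
    (h : ∀ p : Matrix (Fin 2) (Fin 2) ℂ, p * p = p → pᴴ = p →
      q * Matrix.kroneckerMap (· * ·) p (1 - p) = 0) :
    q = 0 := by
  have h1 := h !![1,0;0,0] (by
    ext i j; fin_cases i <;> fin_cases j <;>
      simp [Matrix.mul_apply, Fin.sum_univ_two]) (by
    ext i j; fin_cases i <;> fin_cases j <;> simp [Matrix.conjTranspose_apply])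
  have h2 := h !![0,0;0,1] (by
    ext i j; fin_cases i <;> fin_cases j <;>
      simp [Matrix.mul_apply, Fin.sum_univ_two]) (by
    ext i j; fin_cases i <;> fin_cases j <;> simp [Matrix.conjTranspose_apply])
  have h3 := h !![1/2,1/2;1/2,1/2] (by
    ext i j; fin_cases i <;> fin_cases j <;>
      simp [Matrix.mul_apply, Fin.sum_univ_two] <;> norm_num) (by
    ext i j; fin_cases i <;> fin_cases j <;> simp [Matrix.conjTranspose_apply])
  have h4 := h !![1/2, Complex.I/2; -Complex.I/2, 1/2] (by
    ext i j; fin_cases i <;> fin_cases j <;>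
      simp [Matrix.mul_apply, Fin.sum_univ_two, Complex.ext_iff] <;> norm_num) (by
    ext i j; fin_cases i <;> fin_cases j <;>
      simp [Matrix.conjTranspose_apply, Complex.ext_iff] <;> norm_num)
  have key :
      Matrix.kroneckerMap (· * ·) !![(1:ℂ),0;0,0] (1 - !![1,0;0,0]) * B1 +
      Matrix.kroneckerMap (· * ·) !![(0:ℂ),0;0,1] (1 - !![0,0;0,1]) * B2 +
      Matrix.kroneckerMap (· * ·) !![(1:ℂ)/2,1/2;1/2,1/2] (1 - !![1/2,1/2;1/2,1/2]) * B3 +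
      Matrix.kroneckerMap (· * ·) !![(1:ℂ)/2, Complex.I/2; -Complex.I/2, 1/2]
        (1 - !![1/2, Complex.I/2; -Complex.I/2, 1/2]) * B4 = 1 := by
    ext ⟨i, k⟩ ⟨j, l⟩
    fin_cases i <;> fin_cases k <;> fin_cases j <;> fin_cases l <;>
      simp [Matrix.mul_apply, Fintype.sum_prod_type, Fin.sum_univ_two,
        Matrix.kroneckerMap, B1, B2, B3, B4, mm4, Matrix.one_apply, Complex.ext_iff] <;>
      norm_num [Prod.ext_iff, Fin.ext_iff]
  calc q = q * 1 := (mul_one q).symm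
    _ = q * (Matrix.kroneckerMap (· * ·) !![(1:ℂ),0;0,0] (1 - !![1,0;0,0]) * B1 +
      Matrix.kroneckerMap (· * ·) !![(0:ℂ),0;0,1] (1 - !![0,0;0,1]) * B2 +
      Matrix.kroneckerMap (· * ·) !![(1:ℂ)/2,1/2;1/2,1/2] (1 - !![1/2,1/2;1/2,1/2]) * B3 +
      Matrix.kroneckerMap (· * ·) !![(1:ℂ)/2, Complex.I/2; -Complex.I/2, 1/2]
        (1 - !![1/2, Complex.I/2; -Complex.I/2, 1/2]) * B4) := by rw [key]
    _ = 0 := by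
      rw [mul_add, mul_add, mul_add, ← mul_assoc, ← mul_assoc, ← mul_assoc, ← mul_assoc,
        h1, h2, h3, h4]
      simp
end

section
/- Let D ⊆ [0,1] × [0,1] be a Lebesgue measurable set such that for every Lebesgue measurable set P ⊆ [0,1], the set D ∩ (P × ([0,1] \ P)) has two-dimensional Lebesgue measure zero. Then D itself has two-dimensional Lebesgue measure zero. -/
open MeasureTheory

theorem stmt5 (D : Set (ℝ × ℝ)) (hD : MeasurableSet D)
    (hDsub : D ⊆ Set.Icc (0:ℝ) 1 ×ˢ Set.Icc (0:ℝ) 1)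
    (h : ∀ P : Set ℝ, MeasurableSet P → P ⊆ Set.Icc (0:ℝ) 1 →
      volume (D ∩ (P ×ˢ (Set.Icc (0:ℝ) 1 \ P))) = 0) :
    volume D = 0 := by
  have key : ∀ k : ℕ, 1 ≤ k → volume D ≤ (k : ENNReal)⁻¹ := by
    intro k hk
    have hkR : (0:ℝ) < k := by exact_mod_cast hk
    set I : ℕ → Set ℝ := fun i => Set.Icc ((i:ℝ)/k) (((i:ℝ)+1)/k) with hIdef
    have cover : D ⊆ ⋃ i ∈ Finset.range k, D ∩ (I i ×ˢ Set.Icc (0:ℝ) 1) := by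
      intro p hp
      obtain ⟨hx, hy⟩ := hDsub hp
      have hx0 : (0:ℝ) ≤ p.1 := hx.1
      have hx1 : p.1 ≤ 1 := hx.2
      have hxk0 : (0:ℝ) ≤ p.1 * k := mul_nonneg hx0 hkR.le
      set i := min (⌊p.1 * k⌋₊) (k-1) with hi
      have hik : i < k := by
        have : i ≤ k - 1 := min_le_right _ _
        omega
      have hlow : (i:ℝ) ≤ p.1 * k := by
        rcases min_cases (⌊p.1 * k⌋₊) (k-1) with ⟨heq, _⟩ | ⟨heq, hlt⟩
        · rw [hi, heq]; exact Nat.floor_le hxk0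
        · rw [hi, heq]
          have h1 : (k:ℝ) - 1 ≤ ⌊p.1 * k⌋₊ := by
            have : k ≤ ⌊p.1 * k⌋₊ := by omega
            have := (Nat.cast_le (α := ℝ)).mpr this
            linarith
          have h2 : (⌊p.1 * k⌋₊ : ℝ) ≤ p.1 * k := Nat.floor_le hxk0
          have h3 : ((k-1 : ℕ) : ℝ) = (k:ℝ) - 1 := by
            rw [Nat.cast_sub hk]; simp
          linarith
      have hhigh : p.1 * k ≤ (i:ℝ) + 1 := by
        rcases min_cases (⌊p.1 * k⌋₊) (k-1) with ⟨heq, _⟩ | ⟨heq, _⟩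
        · rw [hi, heq]; exact (Nat.lt_floor_add_one _).le
        · rw [hi, heq]
          have h3 : ((k-1 : ℕ) : ℝ) = (k:ℝ) - 1 := by
            rw [Nat.cast_sub hk]; simp
          rw [h3]
          have : p.1 * k ≤ 1 * k := by
            apply mul_le_mul_of_nonneg_right hx1 hkR.le
          linarith
      refine Set.mem_biUnion (Finset.mem_range.mpr hik) ⟨hp, ?_, hy⟩
      constructor
      · rw [div_le_iff₀ hkR]; exact hlow
      · rw [le_div_iff₀ hkR]; exact hhigh
    have step : ∀ i : ℕ, volume (D ∩ (I i ×ˢ Set.Icc (0:ℝ) 1)) ≤ (k:ENNReal)⁻¹ * (k:ENNReal)⁻¹ := by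
      intro i
      set P := I i ∩ Set.Icc (0:ℝ) 1 with hP
      have hPmeas : MeasurableSet P := (measurableSet_Icc.inter measurableSet_Icc)
      have hPsub : P ⊆ Set.Icc (0:ℝ) 1 := Set.inter_subset_right
      have hsplit : D ∩ (I i ×ˢ Set.Icc (0:ℝ) 1) ⊆
          (D ∩ (P ×ˢ (Set.Icc (0:ℝ) 1 \ P))) ∪ (I i ×ˢ I i) := by
        rintro p ⟨hpD, hp1, hp2⟩
        obtain ⟨hx, hy⟩ := hDsub hpD
        by_cases hyI : p.2 ∈ I i
        · exact Or.inr ⟨hp1, hyI⟩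
        · exact Or.inl ⟨hpD, ⟨hp1, hx⟩, hp2, fun hc => hyI hc.1⟩
      calc volume (D ∩ (I i ×ˢ Set.Icc (0:ℝ) 1))
          ≤ volume ((D ∩ (P ×ˢ (Set.Icc (0:ℝ) 1 \ P))) ∪ (I i ×ˢ I i)) :=
            measure_mono hsplit
        _ ≤ volume (D ∩ (P ×ˢ (Set.Icc (0:ℝ) 1 \ P))) + volume (I i ×ˢ I i) :=
            measure_union_le _ _
        _ = volume (I i ×ˢ I i) := by rw [h P hPmeas hPsub, zero_add]
        _ = (k:ENNReal)⁻¹ * (k:ENNReal)⁻¹ := by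
            rw [hIdef]
            rw [Measure.volume_eq_prod, Measure.prod_prod, Real.volume_Icc]
            have : ((i:ℝ)+1)/k - (i:ℝ)/k = 1/k := by field_simp; ring
            rw [this, one_div, ENNReal.ofReal_inv_of_pos hkR, ENNReal.ofReal_natCast]
    calc volume D ≤ volume (⋃ i ∈ Finset.range k, D ∩ (I i ×ˢ Set.Icc (0:ℝ) 1)) :=
          measure_mono cover
      _ ≤ ∑ i ∈ Finset.range k, volume (D ∩ (I i ×ˢ Set.Icc (0:ℝ) 1)) :=
          measure_biUnion_finset_le _ _
      _ ≤ ∑ i ∈ Finset.range k, (k:ENNReal)⁻¹ * (k:ENNReal)⁻¹ :=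
          Finset.sum_le_sum fun i _ => step i
      _ = (k:ENNReal) * ((k:ENNReal)⁻¹ * (k:ENNReal)⁻¹) := by
          rw [Finset.sum_const, Finset.card_range, nsmul_eq_mul]
      _ = (k:ENNReal)⁻¹ := by
          rw [← mul_assoc, ENNReal.mul_inv_cancel (Nat.cast_ne_zero.mpr (by omega) : (k:ENNReal) ≠ 0) (ENNReal.natCast_ne_top k), one_mul]
  have hle : volume D ≤ 0 := by
    refine ge_of_tendsto ENNReal.tendsto_inv_nat_nhds_zero ?_
    exact Filter.eventually_atTop.mpr ⟨1, fun n hn => key n hn⟩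
  exact le_antisymm hle zero_le
end

section
/- Let A be a (not necessarily unital) subalgebra of Mₙ(ℂ). Then A is nilpotent, i.e. there exists a positive integer k such that every product of k elements of A is zero, if and only if Tr(a) = 0 for every a ∈ A. -/
open Module LinearMap Set Matrix

attribute [local instance] LieRing.ofAssociativeRing

-- Lemma 0: pow sub pow nilpotent
lemma aux_pow_sub_pow_nilpotent {A : Type*} [Ring A] {x y : A} (h : Commute x y)
    (hn : IsNilpotent (x - y)) (m : ℕ) : IsNilpotent (x ^ m - y ^ m) := by
  rw [← h.mul_geom_sum₂ m]
  refine Commute.isNilpotent_mul_right ?_ hn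
  refine Commute.sum_right _ _ _ fun i _ => ?_
  exact (((Commute.refl x).sub_left h.symm).pow_right _).mul_right
    ((h.sub_left (Commute.refl y)).pow_right _)

-- Lemma A
lemma aux_trace_pow_restrict {V : Type*} [AddCommGroup V] [Module ℂ V]
    [FiniteDimensional ℂ V] (f : Module.End ℂ V) (μ : ℂ) (m : ℕ)
    (h : Set.MapsTo (f ^ m) ↑(f.maxGenEigenspace μ) ↑(f.maxGenEigenspace μ)) :
    LinearMap.trace ℂ _ ((f ^ m).restrict h)
      = μ ^ m * (Module.finrank ℂ (f.maxGenEigenspace μ) : ℂ) := by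
  set p := f.maxGenEigenspace μ with hp
  set g := f.restrict (f.mapsTo_maxGenEigenspace_of_comm rfl μ) with hgdef
  have hg : (f ^ m).restrict h = g ^ m := (Module.End.pow_restrict m _).symm
  have hcomm : Commute g (algebraMap ℂ (Module.End ℂ p) μ) :=
    (Algebra.commute_algebraMap_right μ g)
  have hsub : g - algebraMap ℂ (Module.End ℂ p) μ
      = (f - algebraMap ℂ (Module.End ℂ V) μ).restrict
        (f.mapsTo_maxGenEigenspace_of_comm (Algebra.mul_sub_algebraMap_commutes f μ) μ) := by
    ext x
    simp [hgdef, LinearMap.restrict_apply, Module.algebraMap_end_apply]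
    rfl
  have hnil : IsNilpotent (g - algebraMap ℂ (Module.End ℂ p) μ) := by
    rw [hsub]
    exact f.isNilpotent_restrict_maxGenEigenspace_sub_algebraMap μ
  have hnilm : IsNilpotent (g ^ m - algebraMap ℂ (Module.End ℂ p) (μ ^ m)) := by
    rw [map_pow]
    exact aux_pow_sub_pow_nilpotent hcomm hnil m
  have := LinearMap.trace_comp_eq_mul_of_commute_of_isNilpotent (M := p) (μ ^ m)
    (Commute.one_left (g ^ m)) hnilm
  rw [hg]
  rw [show (1 : Module.End ℂ ↥p) ∘ₗ (g ^ m) = g ^ m by ext x; simp,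
    LinearMap.trace_one] at this
  exact this

-- Lemma B
lemma aux_isNilpotent_of_trace_pow {V : Type*} [AddCommGroup V] [Module ℂ V]
    [FiniteDimensional ℂ V] (f : Module.End ℂ V)
    (h : ∀ m : ℕ, 0 < m → LinearMap.trace ℂ V (f ^ m) = 0) : IsNilpotent f := by
  classical
  have hds := DirectSum.isInternal_submodule_of_iSupIndep_of_iSup_eq_top
    (f.independent_maxGenEigenspace) (f.iSup_maxGenEigenspace_eq_top)
  have hfin : {μ : ℂ | f.maxGenEigenspace μ ≠ ⊥}.Finite :=
    WellFoundedGT.finite_ne_bot_of_iSupIndep f.independent_maxGenEigenspace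
  set s := hfin.toFinset with hs
  have hmaps : ∀ (m : ℕ) (μ : ℂ), Set.MapsTo (f ^ m)
      ↑(f.maxGenEigenspace μ) ↑(f.maxGenEigenspace μ) :=
    fun m μ => f.mapsTo_maxGenEigenspace_of_comm ((Commute.refl f).pow_right m) μ
  have key : ∀ m : ℕ, 0 < m →
      ∑ μ ∈ s, μ ^ m * (Module.finrank ℂ (f.maxGenEigenspace μ) : ℂ) = 0 := by
    intro m hm
    have := LinearMap.trace_eq_sum_trace_restrict' hds hfin (hmaps m)
    rw [h m hm] at this
    have h2 : ∑ μ ∈ s, μ ^ m * (Module.finrank ℂ (f.maxGenEigenspace μ) : ℂ)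
        = ∑ μ ∈ hfin.toFinset, LinearMap.trace ℂ _ ((f ^ m).restrict (hmaps m μ)) :=
      Finset.sum_congr rfl fun μ _ => (aux_trace_pow_restrict f μ m (hmaps m μ)).symm
    rw [h2]
    exact this.symm
  -- all eigenvalues are zero
  have hzero : ∀ μ ∈ s, μ = 0 := by
    intro μ₀ hμ₀
    by_contra hne
    set P : Polynomial ℂ := Polynomial.X * ∏ ν ∈ s.erase μ₀, (Polynomial.X - Polynomial.C ν)
      with hP
    have hP0 : P.coeff 0 = 0 := by
      rw [Polynomial.coeff_zero_eq_eval_zero]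
      simp [hP]
    have hsum : ∑ μ ∈ s, P.eval μ * (Module.finrank ℂ (f.maxGenEigenspace μ) : ℂ) = 0 := by
      have expand : ∀ μ : ℂ, P.eval μ =
          ∑ i ∈ Finset.range (P.natDegree + 1), P.coeff i * μ ^ i := fun μ =>
        Polynomial.eval_eq_sum_range (p := P) μ
      calc ∑ μ ∈ s, P.eval μ * (Module.finrank ℂ (f.maxGenEigenspace μ) : ℂ)
          = ∑ μ ∈ s, ∑ i ∈ Finset.range (P.natDegree + 1),
              P.coeff i * (μ ^ i * (Module.finrank ℂ (f.maxGenEigenspace μ) : ℂ)) := by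
            refine Finset.sum_congr rfl fun μ _ => ?_
            rw [expand μ, Finset.sum_mul]
            refine Finset.sum_congr rfl fun i _ => by ring
        _ = ∑ i ∈ Finset.range (P.natDegree + 1),
              P.coeff i * ∑ μ ∈ s, μ ^ i * (Module.finrank ℂ (f.maxGenEigenspace μ) : ℂ) := by
            rw [Finset.sum_comm]
            exact Finset.sum_congr rfl fun i _ => by rw [Finset.mul_sum]
        _ = 0 := by
            refine Finset.sum_eq_zero fun i hi => ?_
            rcases Nat.eq_zero_or_pos i with h0 | hpos
            · subst h0; rw [hP0, zero_mul]
            · rw [key i hpos, mul_zero]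
    have honly : ∑ μ ∈ s, P.eval μ * (Module.finrank ℂ (f.maxGenEigenspace μ) : ℂ)
        = P.eval μ₀ * (Module.finrank ℂ (f.maxGenEigenspace μ₀) : ℂ) := by
      refine Finset.sum_eq_single μ₀ (fun μ hμ hne' => ?_) (fun habs => absurd hμ₀ habs)
      have : P.eval μ = 0 := by
        rw [hP]
        simp only [Polynomial.eval_mul, Polynomial.eval_prod, Polynomial.eval_sub,
          Polynomial.eval_X, Polynomial.eval_C]
        have : (μ - μ) = 0 := sub_self μ
        rw [Finset.prod_eq_zero (Finset.mem_erase.mpr ⟨hne', hμ⟩) this, mul_zero]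
      rw [this, zero_mul]
    have hPμ₀ : P.eval μ₀ ≠ 0 := by
      rw [hP]
      simp only [Polynomial.eval_mul, Polynomial.eval_prod, Polynomial.eval_sub,
        Polynomial.eval_X, Polynomial.eval_C]
      refine mul_ne_zero hne (Finset.prod_ne_zero_iff.mpr fun ν hν => ?_)
      exact sub_ne_zero_of_ne (Ne.symm (Finset.mem_erase.mp hν).1)
    have hd : (Module.finrank ℂ (f.maxGenEigenspace μ₀) : ℂ) ≠ 0 := by
      have : f.maxGenEigenspace μ₀ ≠ ⊥ := by
        simpa [hs] using hμ₀
      have hpos : 0 < Module.finrank ℂ (f.maxGenEigenspace μ₀) := by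
        have := Submodule.nontrivial_iff_ne_bot.mpr this
        exact Module.finrank_pos
      exact_mod_cast Nat.cast_ne_zero.mpr hpos.ne'
    rw [honly] at hsum
    exact (mul_ne_zero hPμ₀ hd) hsum
  -- hence maxGenEigenspace 0 = ⊤
  have htop : f.maxGenEigenspace 0 = ⊤ := by
    rw [← f.iSup_maxGenEigenspace_eq_top]
    refine le_antisymm (le_iSup _ 0) (iSup_le fun μ => ?_)
    rcases eq_or_ne μ 0 with rfl | hμ
    · exact le_rfl
    · have : f.maxGenEigenspace μ = ⊥ := by
        by_contra hb
        exact hμ (hzero μ (by simpa [hs] using hb))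
      simp [this]
  -- conclude nilpotency
  have : ∀ v : V, ∃ k : ℕ, (f ^ k) v = 0 := by
    intro v
    have hv : v ∈ f.maxGenEigenspace 0 := htop ▸ Submodule.mem_top
    rw [Module.End.mem_maxGenEigenspace] at hv
    obtain ⟨k, hk⟩ := hv
    exact ⟨k, by simpa using hk⟩
  exact ((f.charpoly_nilpotent_tfae).out 2 0).mp this

-- Lemma C : matrix version
lemma aux_matrix_isNilpotent {n : ℕ} (A : Matrix (Fin n) (Fin n) ℂ)
    (h : ∀ m : ℕ, 0 < m → (A ^ m).trace = 0) : IsNilpotent A := by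
  have hcoe : ∀ B : Matrix (Fin n) (Fin n) ℂ,
      (Matrix.toLinAlgEquiv' B : (Fin n → ℂ) →ₗ[ℂ] (Fin n → ℂ)) = Matrix.toLin' B := fun _ => rfl
  have htr : ∀ B : Matrix (Fin n) (Fin n) ℂ,
      LinearMap.trace ℂ (Fin n → ℂ) (Matrix.toLinAlgEquiv' B) = B.trace := by
    intro B
    rw [hcoe, LinearMap.trace_eq_matrix_trace ℂ (Pi.basisFun ℂ (Fin n)),
      LinearMap.toMatrix_eq_toMatrix', LinearMap.toMatrix'_toLin']
  have hnil : IsNilpotent (Matrix.toLinAlgEquiv' A : (Fin n → ℂ) →ₗ[ℂ] (Fin n → ℂ)) := by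
    refine aux_isNilpotent_of_trace_pow _ fun m hm => ?_
    have hpow : (Matrix.toLinAlgEquiv' A : (Fin n → ℂ) →ₗ[ℂ] (Fin n → ℂ)) ^ m
        = Matrix.toLinAlgEquiv' (A ^ m) := (map_pow Matrix.toLinAlgEquiv' A m).symm
    rw [hpow, htr, h m hm]
  exact (IsNilpotent.map_iff (Matrix.toLinAlgEquiv'.injective)).mp hnil

theorem stmt7 (n : ℕ) (S : Submodule ℂ (Matrix (Fin n) (Fin n) ℂ))
    (hmul : ∀ a ∈ S, ∀ b ∈ S, a * b ∈ S) :
    (∃ k : ℕ, 0 < k ∧ ∀ f : Fin k → Matrix (Fin n) (Fin n) ℂ,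
        (∀ i, f i ∈ S) → (List.ofFn f).prod = 0) ↔
    (∀ a ∈ S, a.trace = 0) := by
  constructor
  · rintro ⟨k, hk, hz⟩ a ha
    have hak : a ^ k = 0 := by
      have := hz (fun _ => a) (fun _ => ha)
      rwa [List.ofFn_const, List.prod_replicate] at this
    have : IsNilpotent a.trace := Matrix.isNilpotent_trace_of_isNilpotent ⟨k, hak⟩
    exact isNilpotent_iff_eq_zero.mp this
  · intro htr
    -- powers stay in S
    have hpowS : ∀ a ∈ S, ∀ m : ℕ, 0 < m → a ^ m ∈ S := by
      intro a ha m hm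
      induction m with
      | zero => exact absurd hm (lt_irrefl 0)
      | succ m ih =>
        rcases Nat.eq_zero_or_pos m with rfl | hm'
        · simpa using ha
        · rw [pow_succ]; exact hmul _ (ih hm') _ ha
    have hnilS : ∀ a ∈ S, IsNilpotent a := fun a ha =>
      aux_matrix_isNilpotent a fun m hm => htr _ (hpowS a ha m hm)
    -- the Lie subalgebra
    set E : Matrix (Fin n) (Fin n) ℂ ≃ₐ[ℂ] Module.End ℂ (Fin n → ℂ) :=
      Matrix.toLinAlgEquiv' with hE
    let L : LieSubalgebra ℂ (Module.End ℂ (Fin n → ℂ)) :=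
    { toSubmodule := S.map E.toLinearMap
      lie_mem' := by
        rintro x y hx hy
        obtain ⟨a, ha, rfl⟩ := hx
        obtain ⟨b, hb, rfl⟩ := hy
        refine ⟨a * b - b * a, S.sub_mem (hmul a ha b hb) (hmul b hb a ha), ?_⟩
        simp only [AlgEquiv.toLinearMap_apply, map_sub, _root_.map_mul]
        rw [LieRing.of_associative_ring_bracket] }
    have hmemL : ∀ a ∈ S, E a ∈ L := fun a ha => ⟨a, ha, rfl⟩
    -- every element acts nilpotently
    have hEng : ∀ x : L, IsNilpotent (LieModule.toEnd ℂ L (Fin n → ℂ) x) := by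
      intro x
      have hx : (LieModule.toEnd ℂ L (Fin n → ℂ) x) = (x : Module.End ℂ (Fin n → ℂ)) := by
        ext v; rfl
      rw [hx]
      obtain ⟨a, ha, hax⟩ := x.2
      have : IsNilpotent (E a) := (hnilS a ha).map E
      rw [AlgEquiv.toLinearMap_apply] at hax
      rwa [hax] at this
    have hN : LieModule.IsNilpotent L (Fin n → ℂ) :=
      (LieModule.isNilpotent_iff_forall' (R := ℂ) (L := L) (M := Fin n → ℂ)).mpr hEng
    obtain ⟨k, hk⟩ := (LieModule.isNilpotent_iff ℂ L (Fin n → ℂ)).mp hN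
    -- products of length j land in the lower central series
    have claim : ∀ (j : ℕ) (f : Fin j → Matrix (Fin n) (Fin n) ℂ), (∀ i, f i ∈ S) →
        ∀ v : Fin n → ℂ, (List.ofFn f).prod *ᵥ v ∈ LieModule.lowerCentralSeries ℂ L (Fin n → ℂ) j := by
      intro j
      induction j with
      | zero =>
        intro f hf v
        simp
      | succ j ih =>
        intro f hf v
        rw [List.ofFn_succ, List.prod_cons, ← Matrix.mulVec_mulVec]
        set w := (List.ofFn fun i => f i.succ).prod *ᵥ v with hw
        have hwmem : w ∈ LieModule.lowerCentralSeries ℂ L (Fin n → ℂ) j := ih _ (fun i => hf i.succ) v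
        have : f 0 *ᵥ w = ⁅(⟨E (f 0), hmemL _ (hf 0)⟩ : L), w⁆ := rfl
        rw [this, LieModule.lowerCentralSeries_succ]
        exact LieSubmodule.lie_mem_lie (LieSubmodule.mem_top _) hwmem
    -- conclude
    refine ⟨k + 1, Nat.succ_pos k, fun f hf => ?_⟩
    have hbot : LieModule.lowerCentralSeries ℂ L (Fin n → ℂ) (k + 1) = ⊥ := by
      rw [LieModule.lowerCentralSeries_succ, hk]
      simp
    have hv : ∀ v : Fin n → ℂ, (List.ofFn f).prod *ᵥ v = 0 := by
      intro v
      have := claim (k + 1) f hf v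
      rwa [hbot, LieSubmodule.mem_bot] at this
    apply Matrix.toLinAlgEquiv'.injective
    rw [map_zero]
    apply LinearMap.ext
    intro v
    simpa [Matrix.toLinAlgEquiv'_apply] using hv v
end

section
/- Let H be a finite-dimensional complex inner product space and let P, Q, R be linear subspaces of H. Then (P ⊔ Qᗮ) ⊓ Q ≤ R if and only if P ≤ Qᗮ ⊔ (Q ⊓ R). -/
theorem stmt12 (H : Type*) [NormedAddCommGroup H] [InnerProductSpace ℂ H]
    [FiniteDimensional ℂ H] (P Q R : Submodule ℂ H) :
    (P ⊔ Qᗮ) ⊓ Q ≤ R ↔ P ≤ Qᗮ ⊔ (Q ⊓ R) := by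
  have htop : Q ⊔ Qᗮ = ⊤ := Submodule.sup_orthogonal_of_hasOrthogonalProjection
  have hbot : Qᗮ ⊓ Q = ⊥ := (Submodule.orthogonal_disjoint Q).symm.eq_bot
  constructor
  · intro h
    calc P ≤ P ⊔ Qᗮ := le_sup_left
      _ = (P ⊔ Qᗮ) ⊓ (Q ⊔ Qᗮ) := by rw [htop, inf_top_eq]
      _ = ((P ⊔ Qᗮ) ⊓ Q) ⊔ Qᗮ := (inf_sup_assoc_of_le Q le_sup_right).symm
      _ ≤ (Q ⊓ R) ⊔ Qᗮ := sup_le_sup_right (le_inf inf_le_right h) _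
      _ = Qᗮ ⊔ (Q ⊓ R) := sup_comm _ _
  · intro h
    calc (P ⊔ Qᗮ) ⊓ Q ≤ (Qᗮ ⊔ (Q ⊓ R)) ⊓ Q :=
          inf_le_inf_right _ (sup_le h le_sup_left)
      _ = ((Q ⊓ R) ⊔ Qᗮ) ⊓ Q := by rw [sup_comm]
      _ = (Q ⊓ R) ⊔ (Qᗮ ⊓ Q) := sup_inf_assoc_of_le Qᗮ inf_le_left
      _ = Q ⊓ R := by rw [hbot, sup_bot_eq]
      _ ≤ R := inf_le_right
end
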